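/- arXiv:2305.04204 — 2 statements merged into one kernel-verified Lean document; each statement's English description precedes it below -/
import Mathlib

section
/- Two tropical polynomials in n variables define the same function on ℝ^n if and only if they define the same function on all of T^n (where T = ℝ ∪ {-∞}). Equivalently, the congruence of functional equality on ℝ^n equals the congruence of functional equality on T^n for T[X_1,…,X_n]. -/
/-!
Give `T` the order topology of `[-∞, ∞)`. Tropical addition (max) and multiplication (addition
of extended reals, with `-∞` absorbing) are continuous for it, so every tropical polynomial defines
a continuous function `Tⁿ → T`. Since `ℝⁿ` is dense in `Tⁿ` and `T` is Hausdorff, two polynomials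
that agree on `ℝⁿ` agree everywhere.
-/

noncomputable section

/-- The tropical semifield `T = ℝ ∪ {-∞}` with max-plus operations. -/
abbrev T : Type := Tropical (WithTop ℝᵒᵈ)

/-- The inclusion `ℝ → T`. -/
def toT (r : ℝ) : T := Tropical.trop ((OrderDual.toDual r : ℝᵒᵈ) : WithTop ℝᵒᵈ)

open Topology Filter

namespace WithTop

theorem denseRange_coe {ι : Type*} [LinearOrder ι] [TopologicalSpace ι] [OrderTopology ι]
    [Nonempty ι] [NoMaxOrder ι] : DenseRange ((↑) : ι → WithTop ι) := by
  intro x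
  induction x with
  | top => exact mem_closure_of_tendsto tendsto_coe_atTop (.of_forall Set.mem_range_self)
  | coe a => exact subset_closure (Set.mem_range_self a)

section ContinuousAdd

variable {ι : Type*} [AddCommGroup ι] [LinearOrder ι] [IsOrderedAddMonoid ι] [NoMinOrder ι]
  [TopologicalSpace ι] [OrderTopology ι]

theorem tendsto_add_nhds_top_left (b : WithTop ι) :
    Tendsto (fun p : WithTop ι × WithTop ι => p.1 + p.2) (𝓝 (⊤, b)) (𝓝 ⊤) := by
  obtain ⟨m, hm⟩ : ∃ m : ι, (m : WithTop ι) < b := by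
    induction b with
    | top => exact ⟨0, coe_lt_top 0⟩
    | coe c => exact (exists_lt c).imp fun _ => coe_lt_coe.2
  refine (tendsto_nhds_top_iff _).2 fun i => ?_
  have h₁ : ∀ᶠ p : WithTop ι × WithTop ι in 𝓝 (⊤, b), ((i - m : ι) : WithTop ι) < p.1 :=
    continuousAt_fst.eventually ((tendsto_nhds_top_iff id).1 tendsto_id _)
  have h₂ : ∀ᶠ p : WithTop ι × WithTop ι in 𝓝 (⊤, b), (m : WithTop ι) < p.2 :=
    continuousAt_snd.eventually (lt_mem_nhds hm)
  filter_upwards [h₁, h₂] with p hp₁ hp₂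
  simpa using WithTop.add_lt_add hp₁ hp₂

instance : ContinuousAdd (WithTop ι) := by
  refine ⟨continuous_iff_continuousAt.2 ?_⟩
  rintro ⟨a, b⟩
  induction a with
  | top => exact tendsto_add_nhds_top_left b
  | coe a =>
    induction b with
    | top =>
      have := (tendsto_add_nhds_top_left (a : WithTop ι)).comp
        (continuous_swap.tendsto ((a : WithTop ι), ⊤))
      rw [ContinuousAt, add_top]
      simpa only [Function.comp_def, Prod.fst_swap, Prod.snd_swap, add_comm] using this
    | coe b =>
      rw [ContinuousAt, nhds_prod_eq, nhds_coe, nhds_coe, prod_map_map_eq, tendsto_map'_iff,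
        ← nhds_prod_eq]
      exact (continuous_coe.tendsto (a + b)).comp tendsto_add

end ContinuousAdd

end WithTop

namespace Tropical

variable {R : Type*} [TopologicalSpace R]

instance : TopologicalSpace (Tropical R) := .induced untrop ‹_›

theorem continuous_untrop : Continuous (untrop : Tropical R → R) := continuous_induced_dom

theorem continuous_trop : Continuous (trop : R → Tropical R) :=
  continuous_induced_rng.2 continuous_id

instance [T2Space R] : T2Space (Tropical R) :=
  .of_injective_continuous untrop_injective continuous_untrop

instance [LinearOrder R] [OrderClosedTopology R] : ContinuousAdd (Tropical R) :=
  ⟨continuous_induced_rng.2 <|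
    (continuous_untrop.comp continuous_fst).min (continuous_untrop.comp continuous_snd)⟩

instance [Add R] [ContinuousAdd R] : ContinuousMul (Tropical R) :=
  ⟨continuous_induced_rng.2 <|
    (continuous_untrop.comp continuous_fst).add (continuous_untrop.comp continuous_snd)⟩

instance [LinearOrderedAddCommMonoidWithTop R] [OrderClosedTopology R] [ContinuousAdd R] :
    IsTopologicalSemiring (Tropical R) where

theorem denseRange_trop_comp {α : Type*} {f : α → R} (hf : DenseRange f) :
    DenseRange (trop ∘ f) :=
  (Function.Surjective.denseRange tropEquiv.surjective).comp hf continuous_trop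

end Tropical

theorem denseRange_toT : DenseRange toT :=
  Tropical.denseRange_trop_comp <|
    WithTop.denseRange_coe.comp OrderDual.toDual.surjective.denseRange WithTop.continuous_coe

/-- Two tropical polynomials in `n` variables define the same function on `ℝⁿ`
if and only if they define the same function on all of `Tⁿ`; i.e. the congruence of
functional equality on `ℝⁿ` equals that of functional equality on `Tⁿ`. -/
theorem stmt2 (n : ℕ) (f g : MvPolynomial (Fin n) T) :
    (∀ x : Fin n → ℝ,
        MvPolynomial.eval (fun i => toT (x i)) f = MvPolynomial.eval (fun i => toT (x i)) g)
      ↔ (∀ x : Fin n → T, MvPolynomial.eval x f = MvPolynomial.eval x g) := by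
  refine ⟨fun h => congrFun ?_, fun h x => h _⟩
  exact (DenseRange.piMap fun _ => denseRange_toT).equalizer
    (MvPolynomial.continuous_eval f) (MvPolynomial.continuous_eval g) (funext h)

end
end

section
/- Let E be a congruence on a semifield S (such as the tropical rational function semifield). Then the following are equivalent: (1) whenever (f, 0_S) ∈ E one has f = 0_S; (2) the quotient semiring S / E is a semifield; (3) E, viewed as a sub-semiring of S × S with componentwise operations, is a semifield. -/
/-- A commutative semiring is a semifield (in the sense of the paper) if `0 ≠ 1` and every
nonzero element is multiplicatively invertible. -/
def IsSemifield (S : Type*) [CommSemiring S] : Prop :=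
  (0 : S) ≠ 1 ∧ ∀ a : S, a ≠ 0 → ∃ b : S, a * b = 1

/-! In a semifield, a congruence relating some `f ≠ 0` to `0` also relates `f * f⁻¹ = 1` to `0`
and so collapses everything. If it does not, every nonzero class is the class of some `f ≠ 0`
and is inverted by the class of `f⁻¹`; likewise a nonzero pair `(f, g) ∈ E` has both coordinates
nonzero and is inverted by `(f⁻¹, g⁻¹)`, which lies in `E` because a multiplicative congruence
on a group with zero respects inversion of nonzero elements. -/

theorem Con.inv_rel_inv {G : Type*} [GroupWithZero G] (c : Con G) {a b : G} (h : c a b)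
    (ha : a ≠ 0) (hb : b ≠ 0) : c a⁻¹ b⁻¹ := by
  have := c.mul (c.mul (c.refl a⁻¹) h) (c.refl b⁻¹)
  rw [inv_mul_cancel₀ ha, one_mul, mul_assoc, mul_inv_cancel₀ hb, mul_one] at this
  exact c.symm this

namespace RingCon

variable {S : Type*} [Semifield S] (E : RingCon S)

theorem rel_one_zero_of_rel_zero {f : S} (hf : E f 0) (hf0 : f ≠ 0) : E 1 0 := by
  simpa [hf0] using E.mul hf (E.refl f⁻¹)

theorem isSemifield_quotient_iff : IsSemifield E.Quotient ↔ ∀ f : S, E f 0 → f = 0 := by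
  constructor
  · rintro ⟨h01, -⟩ f hf
    by_contra hf0
    refine h01 ?_
    rw [← coe_zero, ← coe_one, E.eq]
    exact E.symm (E.rel_one_zero_of_rel_zero hf hf0)
  · intro h
    refine ⟨fun h01 => one_ne_zero (h 1 (E.symm ?_)), ?_⟩
    · rwa [← coe_zero, ← coe_one, E.eq] at h01
    · intro a ha
      obtain ⟨f, rfl⟩ := E.mk'_surjective a
      have hf0 : f ≠ 0 := by
        rintro rfl
        exact ha (map_zero _)
      exact ⟨E.mk' f⁻¹, by rw [← map_mul, mul_inv_cancel₀ hf0, map_one]⟩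

theorem forall_rel_exists_mul_eq_one_iff :
    (∀ p : S × S, E p.1 p.2 → p ≠ 0 → ∃ q : S × S, E q.1 q.2 ∧ p * q = 1) ↔
      ∀ f : S, E f 0 → f = 0 := by
  constructor
  · intro hinv f hf
    by_contra hf0
    obtain ⟨q, -, hpq⟩ := hinv (f, 0) hf (by simp [hf0])
    simpa using congrArg Prod.snd hpq
  · rintro h ⟨f, g⟩ (hfg : E f g) hp
    have hf : f ≠ 0 := by
      rintro rfl
      exact hp (by simp [h g (E.symm hfg)])
    have hg : g ≠ 0 := by
      rintro rfl
      exact hp (by simp [h f hfg])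
    exact ⟨(f⁻¹, g⁻¹), E.toCon.inv_rel_inv hfg hf hg,
      by simp [Prod.ext_iff, mul_inv_cancel₀ hf, mul_inv_cancel₀ hg]⟩

end RingCon

/-- For a congruence `E` on a semifield `S`, the following are equivalent:
(1) `(f, 0) ∈ E` implies `f = 0`;
(2) the quotient `S / E` is a semifield;
(3) `E`, viewed as a sub-semiring of `S × S` with componentwise operations, is a semifield. -/
theorem stmt4 {S : Type*} [Semifield S] (E : RingCon S) :
    ((∀ f : S, E f 0 → f = 0) ↔ IsSemifield E.Quotient) ∧
    (IsSemifield E.Quotient ↔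
      (((0 : S), (0 : S)) ≠ ((1 : S), (1 : S)) ∧
        ∀ p : S × S, E p.1 p.2 → p ≠ 0 →
          ∃ q : S × S, E q.1 q.2 ∧ p * q = 1)) := by
  have hquot := E.isSemifield_quotient_iff
  have h0ne1 : ((0 : S), (0 : S)) ≠ ((1 : S), (1 : S)) := by simp
  exact ⟨hquot.symm, hquot.trans <| E.forall_rel_exists_mul_eq_one_iff.symm.trans
    (and_iff_right h0ne1).symm⟩
end
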